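/- Let a ∈ ℝ with a ≠ 0, let f(v) = a·v be a linear flux, let u : ℝ → ℝ be infinitely differentiable, let x ∈ ℝ, and take κ = 1/3. Then the UMUSCL residual satisfies Res(h) = O(h³) as h → 0⁺; that is, the UMUSCL scheme with κ = 1/3 is third-order accurate for linear conservation laws on a uniform grid. -/

import Mathlib

open Filter Topology Asymptotics

/-- Van Leer κ-reconstructed left state at the face `x + h/2`. -/
noncomputable def uLp (κ : ℝ) (u : ℝ → ℝ) (x h : ℝ) : ℝ :=
  κ * (u x + u (x + h)) / 2 + (1 - κ) * (u x + (u (x + h) - u (x - h)) / 4)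

/-- Van Leer κ-reconstructed right state at the face `x + h/2`. -/
noncomputable def uRp (κ : ℝ) (u : ℝ → ℝ) (x h : ℝ) : ℝ :=
  κ * (u (x + h) + u x) / 2 + (1 - κ) * (u (x + h) - (u (x + 2 * h) - u x) / 4)

/-- Van Leer κ-reconstructed left state at the face `x − h/2`. -/
noncomputable def uLm (κ : ℝ) (u : ℝ → ℝ) (x h : ℝ) : ℝ :=
  κ * (u (x - h) + u x) / 2 + (1 - κ) * (u (x - h) + (u x - u (x - 2 * h)) / 4)

/-- Van Leer κ-reconstructed right state at the face `x − h/2`. -/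
noncomputable def uRm (κ : ℝ) (u : ℝ → ℝ) (x h : ℝ) : ℝ :=
  κ * (u x + u (x - h)) / 2 + (1 - κ) * (u x - (u (x + h) - u (x - h)) / 4)

/-- The UMUSCL numerical flux `F(a,b) = (f(a)+f(b))/2 − (|f′((a+b)/2)|/2)(b−a)`. -/
noncomputable def numFlux (f : ℝ → ℝ) (a b : ℝ) : ℝ :=
  (f a + f b) / 2 - (|deriv f ((a + b) / 2)| / 2) * (b - a)

/-- The UMUSCL residual at `x` for the steady conservation law `∂ₓ f(u) = s`
with forcing `s(y) = d/dy f(u(y))`. -/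
noncomputable def umusclRes (f : ℝ → ℝ) (κ : ℝ) (u : ℝ → ℝ) (x h : ℝ) : ℝ :=
  (numFlux f (uLp κ u x h) (uRp κ u x h) - numFlux f (uLm κ u x h) (uRm κ u x h)) / h
    - deriv f (u x) * deriv u x

section UmusclAux

open ContDiff

private lemma itd_add' {f g : ℝ → ℝ} (hf : ContDiff ℝ ∞ f) (hg : ContDiff ℝ ∞ g)
    (n : ℕ) (x : ℝ) :
    iteratedDeriv n (fun y => f y + g y) x = iteratedDeriv n f x + iteratedDeriv n g x := by
  rw [← iteratedDerivWithin_univ, ← iteratedDerivWithin_univ, ← iteratedDerivWithin_univ]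
  exact iteratedDerivWithin_add (Set.mem_univ x) uniqueDiffOn_univ
    (hf.contDiffWithinAt.of_le (by exact_mod_cast le_top))
    (hg.contDiffWithinAt.of_le (by exact_mod_cast le_top))

private lemma itd_cmul' {f : ℝ → ℝ} (hf : ContDiff ℝ ∞ f) (c : ℝ) (n : ℕ) (x : ℝ) :
    iteratedDeriv n (fun y => c * f y) x = c * iteratedDeriv n f x := by
  rw [← iteratedDerivWithin_univ, ← iteratedDerivWithin_univ]
  exact iteratedDerivWithin_const_mul (Set.mem_univ x) uniqueDiffOn_univ c
    (hf.contDiffWithinAt.of_le (by exact_mod_cast le_top))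

private lemma itd_scale' {u : ℝ → ℝ} (hu : ContDiff ℝ ∞ u) (x c : ℝ) (n : ℕ) :
    iteratedDeriv n (fun h => u (x + c * h)) 0 = c ^ n * iteratedDeriv n u x := by
  have h1 : ContDiff ℝ (n : ℕ) (fun z => u (x + z)) :=
    (hu.of_le (by exact_mod_cast le_top)).comp (contDiff_const.add contDiff_id)
  have h2 := congrFun (iteratedDeriv_comp_const_mul h1 c) 0
  have h3 := congrFun (iteratedDeriv_comp_const_add n u x) (c * 0)
  calc iteratedDeriv n (fun h => u (x + c * h)) 0
      = c ^ n * iteratedDeriv n (fun z => u (x + z)) (c * 0) := h2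
    _ = c ^ n * iteratedDeriv n u (x + c * 0) := by rw [h3]
    _ = c ^ n * iteratedDeriv n u x := by ring_nf

private lemma itd_lin' (e : ℝ) (k : ℕ) :
    iteratedDeriv k (fun h : ℝ => e * h) 0 = if k = 1 then e else 0 := by
  have hd : deriv (fun h : ℝ => e * h) = fun _ => e := by
    funext y
    simpa using ((hasDerivAt_id y).const_mul e).deriv
  match k with
  | 0 => simp [iteratedDeriv_zero]
  | 1 => simp [iteratedDeriv_one, hd]
  | (n+2) =>
    have hz : ∀ m : ℕ, iteratedDeriv m (fun _ : ℝ => (0:ℝ)) 0 = 0 := by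
      intro m
      induction m with
      | zero => simp [iteratedDeriv_zero]
      | succ m ih =>
        rw [iteratedDeriv_succ']
        simpa [deriv_const'] using ih
    rw [iteratedDeriv_succ', hd, iteratedDeriv_succ']
    simpa [deriv_const'] using hz n

private lemma itd_comb' {u : ℝ → ℝ} (hu : ContDiff ℝ ∞ u) (x : ℝ)
    (c₁ d₁ c₂ d₂ c₃ d₃ c₄ d₄ c₅ d₅ e : ℝ) (k : ℕ) :
    iteratedDeriv k (fun h => c₁ * u (x + d₁ * h) + c₂ * u (x + d₂ * h) + c₃ * u (x + d₃ * h)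
        + c₄ * u (x + d₄ * h) + c₅ * u (x + d₅ * h) + e * h) 0
      = (c₁ * d₁ ^ k + c₂ * d₂ ^ k + c₃ * d₃ ^ k + c₄ * d₄ ^ k + c₅ * d₅ ^ k)
          * iteratedDeriv k u x + (if k = 1 then e else 0) := by
  have hs : ∀ d : ℝ, ContDiff ℝ ∞ (fun h => u (x + d * h)) := fun d =>
    hu.comp (contDiff_const.add (contDiff_const.mul contDiff_id))
  have ht : ∀ c d : ℝ, ContDiff ℝ ∞ (fun h => c * u (x + d * h)) := fun c d =>
    contDiff_const.mul (hs d)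
  have hlin : ContDiff ℝ ∞ (fun h : ℝ => e * h) := contDiff_const.mul contDiff_id
  rw [itd_add' (((((ht c₁ d₁).add (ht c₂ d₂)).add (ht c₃ d₃)).add (ht c₄ d₄)).add (ht c₅ d₅)) hlin,
    itd_add' ((((ht c₁ d₁).add (ht c₂ d₂)).add (ht c₃ d₃)).add (ht c₄ d₄)) (ht c₅ d₅),
    itd_add' (((ht c₁ d₁).add (ht c₂ d₂)).add (ht c₃ d₃)) (ht c₄ d₄),
    itd_add' ((ht c₁ d₁).add (ht c₂ d₂)) (ht c₃ d₃),
    itd_add' (ht c₁ d₁) (ht c₂ d₂),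
    itd_cmul' (hs d₁) c₁, itd_cmul' (hs d₂) c₂, itd_cmul' (hs d₃) c₃,
    itd_cmul' (hs d₄) c₄, itd_cmul' (hs d₅) c₅,
    itd_scale' hu x d₁ k, itd_scale' hu x d₂ k, itd_scale' hu x d₃ k,
    itd_scale' hu x d₄ k, itd_scale' hu x d₅ k, itd_lin' e k]
  ring

private lemma step_bigO (g : ℝ → ℝ) (hg : Differentiable ℝ g) (h0 : g 0 = 0) (n : ℕ)
    (hd : (deriv g) =O[𝓝 (0:ℝ)] fun h => h ^ n) : g =O[𝓝 (0:ℝ)] fun h => h ^ (n+1) := by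
  rcases hd.exists_pos with ⟨C, hCpos, hC⟩
  rw [IsBigOWith, Metric.eventually_nhds_iff] at hC
  obtain ⟨ε, hε, hball⟩ := hC
  rw [isBigO_iff]
  refine ⟨C, ?_⟩
  rw [Metric.eventually_nhds_iff]
  refine ⟨ε, hε, fun y hy => ?_⟩
  rw [Real.dist_eq, sub_zero] at hy
  have key : ∀ z ∈ Set.uIcc (0:ℝ) y, ‖deriv g z‖ ≤ C * |y| ^ n := by
    intro z hz
    have hz1 : |z| ≤ |y| := by
      rcases Set.mem_uIcc.mp hz with ⟨h1, h2⟩ | ⟨h1, h2⟩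
      · rw [abs_of_nonneg h1]; exact le_trans h2 (le_abs_self y)
      · rw [abs_of_nonpos h2]; exact le_trans (neg_le_neg h1) (neg_le_abs y)
    have hz2 : dist z 0 < ε := by
      rw [Real.dist_eq, sub_zero]; exact lt_of_le_of_lt hz1 hy
    calc ‖deriv g z‖ ≤ C * ‖z ^ n‖ := hball hz2
      _ = C * |z| ^ n := by rw [Real.norm_eq_abs, abs_pow]
      _ ≤ C * |y| ^ n := by
          have := pow_le_pow_left₀ (abs_nonneg z) hz1 n
          nlinarith [pow_nonneg (abs_nonneg z) n]
  have hmv := (convex_uIcc (0:ℝ) y).norm_image_sub_le_of_norm_hasDerivWithin_le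
    (f := g) (f' := deriv g)
    (fun z _ => (hg z).hasDerivAt.hasDerivWithinAt) key Set.left_mem_uIcc Set.right_mem_uIcc
  rw [h0, sub_zero, sub_zero] at hmv
  calc ‖g y‖ ≤ C * |y| ^ n * ‖y‖ := hmv
    _ = C * ‖y ^ (n+1)‖ := by
        rw [Real.norm_eq_abs, Real.norm_eq_abs, abs_pow, pow_succ]; ring

private lemma taylor_bigO (n : ℕ) :
    ∀ (g : ℝ → ℝ), ContDiff ℝ ∞ g → (∀ k ≤ n, iteratedDeriv k g 0 = 0) →
      g =O[𝓝 (0:ℝ)] fun h => h ^ (n+1) := by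
  induction n with
  | zero =>
    intro g hg hk
    refine step_bigO g (hg.differentiable (by simp))
      (by simpa [iteratedDeriv_zero] using hk 0 le_rfl) 0 ?_
    have hcont : Continuous (deriv g) :=
      hg.continuous_deriv (by exact_mod_cast le_top)
    simpa [pow_zero] using (hcont.continuousAt (x := (0:ℝ))).isBigO_one ℝ
  | succ n ih =>
    intro g hg hk
    refine step_bigO g (hg.differentiable (by simp))
      (by simpa [iteratedDeriv_zero] using hk 0 (Nat.zero_le _)) (n+1) ?_
    refine ih (deriv g) (contDiff_infty_iff_deriv.mp hg).2 (fun k hkk => ?_)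
    rw [← iteratedDeriv_succ']
    exact hk (k+1) (Nat.succ_le_succ hkk)

end UmusclAux

open ContDiff in
/-- For a linear flux `f(v) = a·v` with `a ≠ 0`, smooth `u`, and `κ = 1/3`, the UMUSCL
residual satisfies `Res(h) = O(h³)` as `h → 0⁺`: the UMUSCL scheme with `κ = 1/3` is
third-order accurate for linear conservation laws on a uniform grid. -/
theorem umuscl_third_order_linear_flux
    (a : ℝ) (ha : a ≠ 0) (f : ℝ → ℝ) (hf : ∀ v : ℝ, f v = a * v)
    (u : ℝ → ℝ) (hu : ContDiff ℝ (⊤ : ℕ∞) u) (x : ℝ) :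
    (fun h : ℝ => umusclRes f (1 / 3) u x h) =O[𝓝[>] (0 : ℝ)] fun h : ℝ => h ^ 3 := by
  have hu' : ContDiff ℝ ∞ u := hu.of_le (by simp)
  have hderiv : ∀ v : ℝ, deriv f v = a := by
    intro v
    have hfe : f = fun w => a * w := funext hf
    rw [hfe]
    simpa using ((hasDerivAt_id v).const_mul a).deriv
  -- the two fourth-order-vanishing combinations
  have hAO : (fun h : ℝ => 8 * u (x + 1 * h) + (-8) * u (x + (-1) * h) + (-1) * u (x + 2 * h)
      + 1 * u (x + (-2) * h) + 0 * u (x + 0 * h) + (-(12 * deriv u x)) * h)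
      =O[𝓝 (0:ℝ)] fun h => h ^ 4 := by
    have hsm : ContDiff ℝ ∞ (fun h : ℝ => 8 * u (x + 1 * h) + (-8) * u (x + (-1) * h)
        + (-1) * u (x + 2 * h) + 1 * u (x + (-2) * h) + 0 * u (x + 0 * h)
        + (-(12 * deriv u x)) * h) := by fun_prop
    have := taylor_bigO 3 _ hsm (fun k hk => by
      rw [itd_comb' hu' x 8 1 (-8) (-1) (-1) 2 1 (-2) 0 0 (-(12 * deriv u x)) k]
      interval_cases k <;> norm_num [iteratedDeriv_one])
    simpa using this
  have hBO : (fun h : ℝ => 4 * u (x + 1 * h) + 4 * u (x + (-1) * h) + (-1) * u (x + 2 * h)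
      + (-1) * u (x + (-2) * h) + (-6) * u (x + 0 * h) + (0:ℝ) * h)
      =O[𝓝 (0:ℝ)] fun h => h ^ 4 := by
    have hsm : ContDiff ℝ ∞ (fun h : ℝ => 4 * u (x + 1 * h) + 4 * u (x + (-1) * h)
        + (-1) * u (x + 2 * h) + (-1) * u (x + (-2) * h) + (-6) * u (x + 0 * h)
        + (0:ℝ) * h) := by fun_prop
    have := taylor_bigO 3 _ hsm (fun k hk => by
      rw [itd_comb' hu' x 4 1 4 (-1) (-1) 2 (-1) (-2) (-6) 0 (0:ℝ) k]
      interval_cases k <;> norm_num [iteratedDeriv_one])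
    simpa using this
  have hNO : (fun h : ℝ => (a/12) * (8 * u (x + 1 * h) + (-8) * u (x + (-1) * h)
        + (-1) * u (x + 2 * h) + 1 * u (x + (-2) * h) + 0 * u (x + 0 * h)
        + (-(12 * deriv u x)) * h)
      + (-(|a|/12)) * (4 * u (x + 1 * h) + 4 * u (x + (-1) * h) + (-1) * u (x + 2 * h)
        + (-1) * u (x + (-2) * h) + (-6) * u (x + 0 * h) + (0:ℝ) * h))
      =O[𝓝 (0:ℝ)] fun h => h ^ 4 :=
    (hAO.const_mul_left _).add (hBO.const_mul_left _)
  rw [isBigO_iff] at hNO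
  obtain ⟨C, hC⟩ := hNO
  rw [isBigO_iff]
  refine ⟨C, ?_⟩
  filter_upwards [hC.filter_mono nhdsWithin_le_nhds, self_mem_nhdsWithin] with h hC' hpos
  have hh : h ≠ 0 := ne_of_gt hpos
  have hres : umusclRes f (1/3) u x h = ((a/12) * (8 * u (x + 1 * h) + (-8) * u (x + (-1) * h)
        + (-1) * u (x + 2 * h) + 1 * u (x + (-2) * h) + 0 * u (x + 0 * h)
        + (-(12 * deriv u x)) * h)
      + (-(|a|/12)) * (4 * u (x + 1 * h) + 4 * u (x + (-1) * h) + (-1) * u (x + 2 * h)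
        + (-1) * u (x + (-2) * h) + (-6) * u (x + 0 * h) + (0:ℝ) * h)) / h := by
    have e1 : x + 1 * h = x + h := by ring
    have e2 : x + (-1) * h = x - h := by ring
    have e3 : x + (-2) * h = x - 2 * h := by ring
    have e4 : x + 0 * h = x := by ring
    simp only [umusclRes, numFlux, uLp, uRp, uLm, uRm, hderiv, hf, e1, e2, e3, e4]
    field_simp
    ring
  rw [hres]
  have habs : |h| ≠ 0 := abs_ne_zero.mpr hh
  calc ‖((a/12) * (8 * u (x + 1 * h) + (-8) * u (x + (-1) * h)
        + (-1) * u (x + 2 * h) + 1 * u (x + (-2) * h) + 0 * u (x + 0 * h)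
        + (-(12 * deriv u x)) * h)
      + (-(|a|/12)) * (4 * u (x + 1 * h) + 4 * u (x + (-1) * h) + (-1) * u (x + 2 * h)
        + (-1) * u (x + (-2) * h) + (-6) * u (x + 0 * h) + (0:ℝ) * h)) / h‖
      = ‖((a/12) * (8 * u (x + 1 * h) + (-8) * u (x + (-1) * h)
        + (-1) * u (x + 2 * h) + 1 * u (x + (-2) * h) + 0 * u (x + 0 * h)
        + (-(12 * deriv u x)) * h)
      + (-(|a|/12)) * (4 * u (x + 1 * h) + 4 * u (x + (-1) * h) + (-1) * u (x + 2 * h)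
        + (-1) * u (x + (-2) * h) + (-6) * u (x + 0 * h) + (0:ℝ) * h))‖ / ‖h‖ :=
        norm_div _ _
    _ ≤ (C * ‖h ^ 4‖) / ‖h‖ := by
        gcongr
    _ = C * ‖h ^ 3‖ := by
        rw [Real.norm_eq_abs, Real.norm_eq_abs, Real.norm_eq_abs, abs_pow, abs_pow]
        field_simp
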